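/- For all words u, w ∈ A* with |u| ≤ |w|: Σ_{x ∈ A^{|w|−|u|}} ⟨x ⧢_q u, w⟩ = binom_q(w, u), where the sum ranges over all words x of length |w|−|u| over A. (Equivalently, the coefficient of w in the q-shuffle of the characteristic series of A* with u equals binom_q(w,u).) -/
import Mathlib


noncomputable def qbinAux {A : Type*} [DecidableEq A] : List A → List A → Polynomial ℕ
  | _, [] => 1
  | [], _ :: _ => 0
  | a :: u, b :: v =>
      Polynomial.X ^ (v.length + 1) * qbinAux u (b :: v) +
        (if a = b then qbinAux u v else 0)

/-- The `q`-binomial coefficient `binom_q(u,v)` of two words. -/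
noncomputable def qbin {A : Type*} [DecidableEq A] (u v : List A) : Polynomial ℕ :=
  qbinAux u.reverse v.reverse

noncomputable def qShuffleAux {A : Type*} [DecidableEq A] :
    List A → List A → (List A →₀ Polynomial ℕ)
  | [], v => Finsupp.single v 1
  | a :: u, [] => Finsupp.single (a :: u) 1
  | a :: u, b :: v =>
      (Polynomial.X : Polynomial ℕ) ^ (v.length + 1) •
          Finsupp.mapDomain (a :: ·) (qShuffleAux u (b :: v)) +
        Finsupp.mapDomain (b :: ·) (qShuffleAux (a :: u) v)

/-- The `q`-shuffle `u ⧢_q v` of two words. -/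
noncomputable def qShuffle {A : Type*} [DecidableEq A] (u v : List A) :
    List A →₀ Polynomial ℕ :=
  Finsupp.mapDomain List.reverse (qShuffleAux u.reverse v.reverse)

section Aux

set_option linter.unusedSectionVars false

variable {A : Type*} [DecidableEq A]

lemma qbinAux_eq_zero : ∀ (u v : List A), u.length < v.length → qbinAux u v = 0
  | _, [], h => by simp at h
  | [], _ :: _, _ => rfl
  | a :: u, b :: v, h => by
      have h' : u.length < v.length := by simpa using h
      rw [qbinAux, qbinAux_eq_zero u (b :: v) (by simpa using Nat.lt_succ_of_lt h'),
        qbinAux_eq_zero u v h']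
      simp

lemma qShuffleAux_nil_right (y : List A) : qShuffleAux y [] = Finsupp.single y 1 := by
  cases y <;> rw [qShuffleAux]

lemma qbinAux_nil_right (u : List A) : qbinAux u [] = 1 := by
  cases u <;> rw [qbinAux]

lemma mapDomain_cons_apply (a c : A) (s : List A →₀ Polynomial ℕ) (W : List A) :
    (Finsupp.mapDomain (a :: ·) s) (c :: W) = if a = c then s W else 0 := by
  split_ifs with h
  · subst h
    exact Finsupp.mapDomain_apply (List.cons_injective) s W
  · refine Finsupp.mapDomain_notin_range _ _ ?_
    rintro ⟨y, hy⟩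
    simp only [List.cons.injEq] at hy
    exact h hy.1

lemma qShuffleAux_cons_cons_apply (a b c : A) (y V W : List A) :
    qShuffleAux (a :: y) (b :: V) (c :: W) =
      Polynomial.X ^ (V.length + 1) * (if a = c then qShuffleAux y (b :: V) W else 0) +
        (if b = c then qShuffleAux (a :: y) V W else 0) := by
  rw [qShuffleAux, Finsupp.add_apply, Finsupp.smul_apply, mapDomain_cons_apply,
    mapDomain_cons_apply, smul_eq_mul]

lemma sum_ofFn_zero {M : Type*} [AddCommMonoid M] [Fintype A] (f : List A → M) :
    ∑ x : Fin 0 → A, f (List.ofFn x) = f [] := by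
  rw [Fintype.sum_unique]
  rw [List.ofFn_zero]

lemma sum_ofFn_succ {M : Type*} [AddCommMonoid M] [Fintype A] (n : ℕ) (f : List A → M) :
    ∑ x : Fin (n + 1) → A, f (List.ofFn x) =
      ∑ a : A, ∑ x : Fin n → A, f (a :: List.ofFn x) := by
  have h1 : ∑ x : Fin (n + 1) → A, f (List.ofFn x)
      = ∑ p : A × (Fin n → A), f (p.1 :: List.ofFn p.2) := by
    refine Fintype.sum_bijective _
      (Fin.consEquiv (fun _ : Fin (n + 1) => A)).symm.bijective _ _ (fun x => ?_)
    rw [List.ofFn_succ]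
    rfl
  rw [h1, Fintype.sum_prod_type]

lemma qsum (A : Type*) [Fintype A] [DecidableEq A] :
    ∀ (W U : List A), ∑ x : Fin (W.length - U.length) → A,
      qShuffleAux (List.ofFn x) U W = qbinAux W U := by
  intro W
  induction W with
  | nil =>
    intro U
    have h0 : ([] : List A).length - U.length = 0 := by simp
    have e0 : (∑ x : Fin 0 → A, qShuffleAux (List.ofFn x) U []) = qShuffleAux [] U [] :=
      sum_ofFn_zero (f := fun y => qShuffleAux y U [])
    rw [show (∑ x : Fin (([] : List A).length - U.length) → A,
        qShuffleAux (List.ofFn x) U []) = ∑ x : Fin 0 → A,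
        qShuffleAux (List.ofFn x) U [] from by rw [h0], e0]
    cases U with
    | nil => rw [qShuffleAux, qbinAux]; simp
    | cons b V => rw [qShuffleAux, qbinAux]; simp [Finsupp.single_apply]
  | cons c W' ih =>
    intro U
    cases U with
    | nil =>
      have e1 : (∑ x : Fin (W'.length + 1) → A, qShuffleAux (List.ofFn x) [] (c :: W')) =
          ∑ a : A, ∑ x : Fin W'.length → A, qShuffleAux (a :: List.ofFn x) [] (c :: W') :=
        sum_ofFn_succ W'.length (f := fun y => qShuffleAux y [] (c :: W'))
      show ∑ x : Fin (W'.length + 1) → A, qShuffleAux (List.ofFn x) [] (c :: W') = _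
      rw [e1, qbinAux]
      have step : ∀ (a : A) (x : Fin W'.length → A),
          qShuffleAux (a :: List.ofFn x) [] (c :: W') =
            if a = c then qShuffleAux (List.ofFn x) [] W' else 0 := by
        intro a x
        rw [qShuffleAux_nil_right, qShuffleAux_nil_right, Finsupp.single_apply,
          Finsupp.single_apply]
        by_cases h1 : a = c
        · subst h1; simp
        · simp [List.cons_eq_cons, h1]
      simp only [step, Finset.sum_ite_irrel, Finset.sum_const_zero, Fintype.sum_ite_eq']
      have hW : qbinAux W' [] = 1 := qbinAux_nil_right W'
      have h2 : (∑ x : Fin W'.length → A, qShuffleAux (List.ofFn x) [] W') = qbinAux W' [] :=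
        ih []
      rw [h2, hW]
    | cons b V =>
      have hlen : (c :: W').length - (b :: V).length = W'.length - V.length := by
        simp
      rw [show (∑ x : Fin ((c :: W').length - (b :: V).length) → A,
          qShuffleAux (List.ofFn x) (b :: V) (c :: W')) =
          ∑ x : Fin (W'.length - V.length) → A,
          qShuffleAux (List.ofFn x) (b :: V) (c :: W') from by rw [hlen]]
      have ihV := ih V
      have ihbV := ih (b :: V)
      rw [qbinAux]
      cases hm : W'.length - V.length with
      | zero =>
        have hle : W'.length ≤ V.length := Nat.sub_eq_zero_iff_le.mp hm
        have e0 : (∑ x : Fin 0 → A, qShuffleAux (List.ofFn x) (b :: V) (c :: W')) =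
            qShuffleAux [] (b :: V) (c :: W') :=
          sum_ofFn_zero (f := fun y => qShuffleAux y (b :: V) (c :: W'))
        rw [e0, qShuffleAux,
          qbinAux_eq_zero W' (b :: V) (by simpa using Nat.lt_succ_of_le hle)]
        rw [hm] at ihV
        have e0' : (∑ x : Fin 0 → A, qShuffleAux (List.ofFn x) V W') =
            qShuffleAux [] V W' :=
          sum_ofFn_zero (f := fun y => qShuffleAux y V W')
        rw [e0', qShuffleAux] at ihV
        rw [← ihV, Finsupp.single_apply, Finsupp.single_apply]
        by_cases h1 : c = b
        · subst h1
          by_cases h2 : V = W'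
          · subst h2; simp
          · simp [h2]
        · have h1' : ¬ b = c := fun hh => h1 hh.symm
          simp [h1, h1', List.cons.injEq]
      | succ m =>
        have e1 : (∑ x : Fin (m + 1) → A, qShuffleAux (List.ofFn x) (b :: V) (c :: W')) =
            ∑ a : A, ∑ x : Fin m → A, qShuffleAux (a :: List.ofFn x) (b :: V) (c :: W') :=
          sum_ofFn_succ m (f := fun y => qShuffleAux y (b :: V) (c :: W'))
        rw [e1]
        simp only [qShuffleAux_cons_cons_apply]
        have inner : ∀ a : A,
            (∑ x : Fin m → A, (Polynomial.X ^ (V.length + 1) *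
                (if a = c then qShuffleAux (List.ofFn x) (b :: V) W' else 0) +
              (if b = c then qShuffleAux (a :: List.ofFn x) V W' else 0))) =
            (if a = c then Polynomial.X ^ (V.length + 1) *
                ∑ x : Fin m → A, qShuffleAux (List.ofFn x) (b :: V) W' else 0) +
              ∑ x : Fin m → A, (if b = c then qShuffleAux (a :: List.ofFn x) V W' else 0) := by
          intro a
          rw [Finset.sum_add_distrib]
          congr 1
          simp only [mul_ite, mul_zero, Finset.sum_ite_irrel, Finset.sum_const_zero,
            Finset.mul_sum]
        simp only [inner]
        rw [Finset.sum_add_distrib, Fintype.sum_ite_eq']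
        have hbV : W'.length - (b :: V).length = m := by
          simp only [List.length_cons]
          omega
        rw [hbV] at ihbV
        rw [ihbV]
        congr 1
        rw [hm] at ihV
        have e1' : (∑ x : Fin (m + 1) → A, qShuffleAux (List.ofFn x) V W') =
            ∑ a : A, ∑ x : Fin m → A, qShuffleAux (a :: List.ofFn x) V W' :=
          sum_ofFn_succ m (f := fun y => qShuffleAux y V W')
        rw [e1'] at ihV
        have swap : (∑ a : A, ∑ x : Fin m → A,
            if b = c then qShuffleAux (a :: List.ofFn x) V W' else 0) =
            if b = c then (∑ a : A, ∑ x : Fin m → A,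
              qShuffleAux (a :: List.ofFn x) V W') else 0 := by
          simp only [Finset.sum_ite_irrel, Finset.sum_const_zero]
        rw [swap, ihV]
        by_cases h1 : b = c
        · simp [h1]
        · have h1' : ¬ c = b := fun hh => h1 hh.symm
          simp [h1, h1']

lemma reverse_ofFn {n : ℕ} (f : Fin n → A) :
    (List.ofFn f).reverse = List.ofFn (fun i => f i.rev) := by
  apply List.ext_getElem
  · simp
  · intro i h1 h2
    simp only [List.length_reverse, List.length_ofFn] at h1 h2
    rw [List.getElem_reverse, List.getElem_ofFn, List.getElem_ofFn]
    congr 1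
    ext
    simp only [List.length_ofFn, Fin.val_rev]
    omega

end Aux

/-- `Σ_{x ∈ A^{|w|-|u|}} ⟨x ⧢_q u, w⟩ = binom_q(w,u)`: the coefficient of `w`
in the `q`-shuffle of the characteristic series of `A*` with `u` is the
`q`-binomial coefficient. Words of length `|w| - |u|` are parametrized by
functions `Fin (|w| - |u|) → A`. -/
theorem qShuffle_char_series_qbin (A : Type*) [Fintype A] [DecidableEq A]
    (u w : List A) (h : u.length ≤ w.length) :
    ∑ x : Fin (w.length - u.length) → A, qShuffle (List.ofFn x) u w = qbin w u := by
  have key := qsum A w.reverse u.reverse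
  have hn : w.reverse.length - u.reverse.length = w.length - u.length := by
    simp
  rw [hn] at key
  rw [qbin, ← key]
  have hinv : Function.Involutive
      (fun (x : Fin (w.length - u.length) → A) => fun i => x i.rev) := by
    intro x
    funext i
    simp [Fin.rev_rev]
  refine Fintype.sum_bijective _ hinv.bijective _ _ (fun x => ?_)
  show (Finsupp.mapDomain List.reverse (qShuffleAux (List.ofFn x).reverse u.reverse)) w =
    qShuffleAux (List.ofFn fun i => x i.rev) u.reverse w.reverse
  rw [reverse_ofFn]
  have hma := Finsupp.mapDomain_apply List.reverse_injective
      (qShuffleAux (List.ofFn fun i => x i.rev) u.reverse) w.reverse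
  rw [List.reverse_reverse] at hma
  exact hma
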